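/- Fix α and r with 0 < α < 1 < r. Then lim_{p → -∞} Θ_p{α, r} = arccos √((1 - α²)/(r² - α²)). -/

import Mathlib

/-!
With `w_p(s) = (1 - s^{2p}) / (1 - r^{2p})`, the function `F_p` is the combination
`w_p · Flim + (1 - w_p) · Fone` of two profiles independent of `p`, where `Flim` vanishes
at `s = r` and `Fone` at `s = 1`; moreover `Flim ≥ (1 - α²)(r + 1)(r - s)` and
`Fone ≥ -(1 - α²)(r + 1)(s - 1)` on `[1, r]`.

As `p → -∞`, `w_p → 1` on `(1, r]`, so `F_p → Flim`, and `∫₁ʳ Flim^{-1/2}` is evaluated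
with the primitive `½ arcsin ((2s² - α² - r²) / (r² - α²))`. For domination: with
`a = log_r s` we have `s^{2p} = (r^{2p})^a`, so `w_p(s)` is the slope of a secant through `1`
of the concave `x ↦ x^a` and hence decreases in `p`. For `p ≤ -1/2` this gives
`w_p(s) ≥ w_{-1/2}(s) = r(s - 1)/(s(r - 1))`, and so
`F_p(s) ≥ (1 - α²)(r + 1)(s - 1)(r - s)/r`, whose inverse square root is integrable.
-/

open Real Filter

/-- `F_p(s, α, r) = ((1 - s^{2p})/(1 - r^{2p}))(r² + α²)
  + ((s^{2p} - r^{2p})/(1 - r^{2p}))(1 + α² r²) - s² - α² r² s⁻²`. -/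
noncomputable def Fp (p α r s : ℝ) : ℝ :=
  (1 - s ^ (2 * p)) / (1 - r ^ (2 * p)) * (r ^ 2 + α ^ 2) +
  (s ^ (2 * p) - r ^ (2 * p)) / (1 - r ^ (2 * p)) * (1 + α ^ 2 * r ^ 2) -
  s ^ 2 - α ^ 2 * r ^ 2 * s ^ (-2 : ℝ)

/-- The period function `Θ_p{α, r} = ∫_1^r ds / √(F_p(s, α, r))`. -/
noncomputable def Theta (p α r : ℝ) : ℝ :=
  ∫ s in (1 : ℝ)..r, (Real.sqrt (Fp p α r s))⁻¹

open MeasureTheory Set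

noncomputable def weight (p r s : ℝ) : ℝ := (1 - s ^ (2 * p)) / (1 - r ^ (2 * p))

noncomputable def Flim (α r s : ℝ) : ℝ := (s ^ 2 - α ^ 2) * (r ^ 2 - s ^ 2) / s ^ 2

noncomputable def Fone (α r s : ℝ) : ℝ := (s ^ 2 - 1) * (α ^ 2 * r ^ 2 - s ^ 2) / s ^ 2

lemma Fp_eq_weight {p α r s : ℝ} (hs : 0 < s) (hr : r ^ (2 * p) ≠ 1) :
    Fp p α r s = weight p r s * Flim α r s + (1 - weight p r s) * Fone α r s := by
  have hr' : 1 - r ^ (2 * p) ≠ 0 := sub_ne_zero.2 hr.symm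
  rw [Fp, weight, Flim, Fone, rpow_neg hs.le, rpow_two]
  field_simp
  ring

lemma sub_mul_le_Flim {α r s : ℝ} (hα : α ^ 2 ≤ 1) (hs : 1 ≤ s) (hsr : s ≤ r) :
    (1 - α ^ 2) * (r + 1) * (r - s) ≤ Flim α r s := by
  rw [Flim, le_div_iff₀ (by positivity)]
  have hs2 : 1 ≤ s ^ 2 := one_le_pow₀ hs
  nlinarith [mul_nonneg (mul_nonneg (sub_nonneg.2 hsr) (sub_nonneg.2 hs)) (sub_nonneg.2 hα),
    mul_nonneg (mul_nonneg (sub_nonneg.2 hsr) (sub_nonneg.2 hs2)) (sq_nonneg α),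
    mul_nonneg (mul_nonneg (sub_nonneg.2 hsr) (sub_nonneg.2 hsr)) (sub_nonneg.2 hα)]

lemma neg_mul_le_Fone {α r s : ℝ} (hα : α ^ 2 ≤ 1) (hs : 1 ≤ s) (hsr : s ≤ r) :
    -((1 - α ^ 2) * (r + 1) * (s - 1)) ≤ Fone α r s := by
  rw [Fone, le_div_iff₀ (by positivity)]
  have hs2 : 1 ≤ s ^ 2 := one_le_pow₀ hs
  have hrs : s ^ 2 ≤ r ^ 2 := by nlinarith
  nlinarith [mul_nonneg (mul_nonneg (sub_nonneg.2 hs2) (sq_nonneg α)) (sub_nonneg.2 hrs),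
    mul_nonneg (mul_nonneg (sub_nonneg.2 hs) (sub_nonneg.2 hα)) (sq_nonneg s),
    mul_nonneg (mul_nonneg (mul_nonneg (sub_nonneg.2 hs) (sub_nonneg.2 hα)) (sq_nonneg s))
      (sub_nonneg.2 hsr)]

lemma one_sub_rpow_div_one_sub_le {a x y : ℝ} (ha₀ : 0 ≤ a) (ha₁ : a ≤ 1) (hx : 0 ≤ x)
    (hxy : x ≤ y) (hy : y < 1) : (1 - y ^ a) / (1 - y) ≤ (1 - x ^ a) / (1 - x) := by
  have h := (concaveOn_rpow ha₀ ha₁).neg.secant_mono (a := 1) (by simp) (by simpa using hx)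
    (by simpa using hx.trans hxy) (by linarith) hy.ne hxy
  have slope (z : ℝ) : (-z ^ a - -1 ^ a) / (z - 1) = -((1 - z ^ a) / (1 - z)) := by
    rw [← div_neg, neg_sub, one_rpow]; ring
  simpa only [Pi.neg_apply, slope, neg_le_neg_iff] using h

lemma weight_le_weight_of_le {p p' r s : ℝ} (hpp' : p ≤ p') (hp' : p' < 0) (hr : 1 < r)
    (hs : 1 ≤ s) (hsr : s ≤ r) : weight p' r s ≤ weight p r s := by
  have hr₀ : 0 < r := by linarith
  have hpow (q : ℝ) : (r ^ (2 * q)) ^ logb r s = s ^ (2 * q) := by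
    rw [← rpow_mul hr₀.le, mul_comm, rpow_mul hr₀.le, rpow_logb hr₀ hr.ne' (by linarith)]
  rw [weight, weight, ← hpow p, ← hpow p']
  exact one_sub_rpow_div_one_sub_le (logb_nonneg hr hs)
    ((logb_le_logb_of_le hr (by linarith) hsr).trans_eq (logb_self_eq_one hr)) (by positivity)
    (rpow_le_rpow_of_exponent_le hr.le (by linarith))
    (rpow_lt_one_of_one_lt_of_neg hr (by linarith))

lemma weight_le_one {p r s : ℝ} (hp : p < 0) (hr : 1 < r) (hs : 0 < s) (hsr : s ≤ r) :
    weight p r s ≤ 1 := by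
  have hR : r ^ (2 * p) < 1 := rpow_lt_one_of_one_lt_of_neg hr (by linarith)
  rw [weight, div_le_one (by linarith)]
  linarith [rpow_le_rpow_of_nonpos hs hsr (by linarith : 2 * p ≤ 0)]

lemma div_le_weight {p r s : ℝ} (hp : p ≤ -1 / 2) (hr : 1 < r) (hs : 1 ≤ s) (hsr : s ≤ r) :
    r * (s - 1) / (s * (r - 1)) ≤ weight p r s := by
  have h := weight_le_weight_of_le hp (by norm_num) hr hs hsr
  have hs₀ : s ≠ 0 := by positivity
  have hr₁ : r - 1 ≠ 0 := by linarith
  rwa [weight, show 2 * (-1 / 2 : ℝ) = -1 by norm_num, rpow_neg_one, rpow_neg_one,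
    show (1 - s⁻¹) / (1 - r⁻¹) = r * (s - 1) / (s * (r - 1)) by field_simp] at h

lemma mul_le_Fp {p α r s : ℝ} (hα : α ^ 2 ≤ 1) (hp : p ≤ -1 / 2) (hr : 1 < r)
    (hs : 1 ≤ s) (hsr : s ≤ r) :
    (1 - α ^ 2) * (r + 1) / r * ((s - 1) * (r - s)) ≤ Fp p α r s := by
  set a := (1 - α ^ 2) * (r + 1)
  set w := weight p r s
  have ha : 0 ≤ a := mul_nonneg (by linarith) (by linarith)
  have hw₀ : r * (s - 1) / (s * (r - 1)) ≤ w := div_le_weight hp hr hs hsr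
  have hw₁ : w ≤ 1 := weight_le_one (by linarith) hr (by linarith) hsr
  have hw : 0 ≤ w := (by positivity : (0 : ℝ) ≤ r * (s - 1) / (s * (r - 1))).trans hw₀
  have hrw : r * (s - 1) / (s * (r - 1)) * (r - 1) = (s - 1) + (s - 1) * (r - s) / s := by
    have hs₀ : s ≠ 0 := by positivity
    have hr₁ : r - 1 ≠ 0 := by linarith
    field_simp; ring
  have hsr' : (s - 1) * (r - s) / r ≤ (s - 1) * (r - s) / s :=
    div_le_div_of_nonneg_left (by nlinarith) (by linarith) hsr
  rw [Fp_eq_weight (by linarith) (rpow_lt_one_of_one_lt_of_neg hr (by linarith)).ne]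
  calc a / r * ((s - 1) * (r - s)) = a * ((s - 1) * (r - s) / r) := by ring
    _ ≤ a * (w * (r - 1) - (s - 1)) := by
      gcongr
      nlinarith [mul_le_mul_of_nonneg_right hw₀ (by linarith : (0 : ℝ) ≤ r - 1)]
    _ = w * (a * (r - s)) + (1 - w) * -(a * (s - 1)) := by ring
    _ ≤ _ := add_le_add (mul_le_mul_of_nonneg_left (sub_mul_le_Flim hα hs hsr) hw)
      (mul_le_mul_of_nonneg_left (neg_mul_le_Fone hα hs hsr) (by linarith))

lemma Flim_pos {α r s : ℝ} (hα : α ^ 2 ≤ 1) (hs : 1 < s) (hsr : s < r) : 0 < Flim α r s :=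
  div_pos (mul_pos (by nlinarith) (by nlinarith)) (by positivity)

lemma tendsto_rpow_two_mul_atBot {b : ℝ} (hb : 1 < b) :
    Tendsto (fun p : ℝ => b ^ (2 * p)) atBot (nhds 0) :=
  (tendsto_rpow_atBot_of_base_gt_one b hb).comp (tendsto_id.const_mul_atBot two_pos)

lemma tendsto_weight_atBot {r s : ℝ} (hr : 1 < r) (hs : 1 < s) :
    Tendsto (fun p => weight p r s) atBot (nhds 1) := by
  have h := ((tendsto_rpow_two_mul_atBot hs).const_sub 1).div
    ((tendsto_rpow_two_mul_atBot hr).const_sub 1) (by norm_num)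
  rwa [sub_zero, div_one] at h

lemma tendsto_Fp_atBot {α r s : ℝ} (hr : 1 < r) (hs : 1 < s) :
    Tendsto (fun p => Fp p α r s) atBot (nhds (Flim α r s)) := by
  have hw := tendsto_weight_atBot hr hs
  have h := (hw.mul_const (Flim α r s)).add ((hw.const_sub 1).mul_const (Fone α r s))
  rw [one_mul, sub_self, zero_mul, add_zero] at h
  refine h.congr' ?_
  filter_upwards [eventually_lt_atBot 0] with p hp
  exact (Fp_eq_weight (by linarith) (rpow_lt_one_of_one_lt_of_neg hr (by linarith)).ne).symm

lemma measurable_inv_sqrt_Fp (p α r : ℝ) : Measurable fun s => (√(Fp p α r s))⁻¹ := by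
  unfold Fp; fun_prop

lemma hasDerivAt_arcsin_chord {a b x : ℝ} (hx : x ∈ Ioo a b) :
    HasDerivAt (fun y => arcsin ((2 * y - a - b) / (b - a))) (√((x - a) * (b - x)))⁻¹ x := by
  obtain ⟨hax, hxb⟩ := hx
  have hba : 0 < b - a := by linarith
  have hX : 0 < (x - a) * (b - x) := mul_pos (by linarith) (by linarith)
  have hlin : HasDerivAt (fun y => (2 * y - a - b) / (b - a)) (2 / (b - a)) x := by
    simpa using ((((hasDerivAt_id x).const_mul 2).sub_const a).sub_const b).div_const (b - a)
  have hne₁ : (2 * x - a - b) / (b - a) ≠ -1 := by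
    rw [Ne, div_eq_iff hba.ne']; intro h; linarith
  have hne₂ : (2 * x - a - b) / (b - a) ≠ 1 := by
    rw [Ne, div_eq_iff hba.ne']; intro h; linarith
  refine ((hasDerivAt_arcsin hne₁ hne₂).comp x hlin).congr_deriv ?_
  have hsq :
      1 - ((2 * x - a - b) / (b - a)) ^ 2 = (2 / (b - a)) ^ 2 * ((x - a) * (b - x)) := by
    field_simp; ring
  rw [hsq, sqrt_mul (sq_nonneg _), sqrt_sq (by positivity)]
  field_simp

lemma intervalIntegrable_inv_sqrt_chord {a b : ℝ} (hab : a ≤ b) :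
    IntervalIntegrable (fun x => (√((x - a) * (b - x)))⁻¹) volume a b := by
  rw [intervalIntegrable_iff_integrableOn_Ioc_of_le hab]
  exact intervalIntegral.integrableOn_deriv_of_nonneg (by fun_prop)
    (fun x hx => hasDerivAt_arcsin_chord hx) (fun x _ => by positivity)

lemma arccos_sqrt_eq {x : ℝ} (hx₀ : 0 ≤ x) (hx₁ : x ≤ 1) :
    arccos √x = π / 4 - arcsin (2 * x - 1) / 2 := by
  set θ := arccos √x
  have hcos : cos (2 * θ) = 2 * x - 1 := by
    rw [cos_two_mul, cos_arccos (by linarith [sqrt_nonneg x]) (sqrt_le_one.2 hx₁), sq_sqrt hx₀]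
  have hθ : arccos (2 * x - 1) = 2 * θ := by
    rw [← hcos]
    exact arccos_cos (by linarith [arccos_nonneg √x])
      (by linarith [arccos_le_pi_div_two.2 (sqrt_nonneg x)])
  rw [arcsin_eq_pi_div_two_sub_arccos, hθ]
  ring

lemma hasDerivAt_half_arcsin_sq {α r s : ℝ} (hα : α ^ 2 ≤ 1) (hs : 1 < s) (hsr : s < r) :
    HasDerivAt (fun y => arcsin ((2 * y ^ 2 - α ^ 2 - r ^ 2) / (r ^ 2 - α ^ 2)) / 2)
      (√(Flim α r s))⁻¹ s := by
  have hs₀ : 0 < s := by linarith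
  have h := ((hasDerivAt_arcsin_chord (a := α ^ 2) (b := r ^ 2) (x := s ^ 2)
    ⟨by nlinarith, by nlinarith⟩).comp s (hasDerivAt_pow 2 s)).div_const 2
  refine h.congr_deriv ?_
  rw [Flim, sqrt_div' _ (sq_nonneg s), sqrt_sq hs₀.le, inv_div]
  have : √((s ^ 2 - α ^ 2) * (r ^ 2 - s ^ 2)) ≠ 0 :=
    (sqrt_pos.2 (mul_pos (by nlinarith) (by nlinarith))).ne'
  field_simp
  ring

lemma integral_inv_sqrt_Flim {α r : ℝ} (hα : α ^ 2 ≤ 1) (hr : 1 < r) :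
    ∫ s in (1 : ℝ)..r, (√(Flim α r s))⁻¹
      = arccos √((1 - α ^ 2) / (r ^ 2 - α ^ 2)) := by
  have hd : 0 < r ^ 2 - α ^ 2 := by nlinarith
  have hcont : ContinuousOn
      (fun y => arcsin ((2 * y ^ 2 - α ^ 2 - r ^ 2) / (r ^ 2 - α ^ 2)) / 2) (Icc 1 r) := by
    fun_prop
  have hderiv (s : ℝ) (hs : s ∈ Ioo 1 r) := hasDerivAt_half_arcsin_sq hα hs.1 hs.2
  have hint : IntervalIntegrable (fun s => (√(Flim α r s))⁻¹) volume 1 r := by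
    rw [intervalIntegrable_iff_integrableOn_Ioc_of_le hr.le]
    exact intervalIntegral.integrableOn_deriv_of_nonneg hcont hderiv (fun s _ => by positivity)
  rw [intervalIntegral.integral_eq_sub_of_hasDerivAt_of_le hr.le hcont hderiv hint,
    arccos_sqrt_eq (div_nonneg (by linarith) hd.le) ((div_le_one hd).2 (by nlinarith))]
  have h₁ : (2 * r ^ 2 - α ^ 2 - r ^ 2) / (r ^ 2 - α ^ 2) = 1 := by
    rw [div_eq_one_iff_eq hd.ne']; ring
  have h₂ : (2 * 1 ^ 2 - α ^ 2 - r ^ 2) / (r ^ 2 - α ^ 2)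
      = 2 * ((1 - α ^ 2) / (r ^ 2 - α ^ 2)) - 1 := by
    field_simp; ring
  rw [h₁, h₂, arcsin_one]
  ring

theorem stmt_9 (α r : ℝ) (hα₀ : 0 < α) (hα₁ : α < 1) (hr : 1 < r) :
    Tendsto (fun p : ℝ => Theta p α r) atBot
      (nhds (Real.arccos (Real.sqrt ((1 - α ^ 2) / (r ^ 2 - α ^ 2))))) := by
  have hα : α ^ 2 ≤ 1 := by nlinarith
  set κ := (1 - α ^ 2) * (r + 1) / r
  have hκ : 0 < κ := div_pos (mul_pos (by nlinarith) (by linarith)) (by linarith)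
  have hIoo : ∀ᵐ s : ℝ, s ∈ uIoc 1 r → 1 < s ∧ s < r := by
    filter_upwards [(by simp [ae_iff, measure_singleton] : ∀ᵐ s : ℝ, s ≠ r)] with s hsr hs
    rw [uIoc_of_le hr.le] at hs
    exact ⟨hs.1, lt_of_le_of_ne hs.2 hsr⟩
  rw [← integral_inv_sqrt_Flim hα hr]
  refine intervalIntegral.tendsto_integral_filter_of_dominated_convergence
    (fun s => (√κ)⁻¹ * (√((s - 1) * (r - s)))⁻¹)
    (.of_forall fun p => (measurable_inv_sqrt_Fp p α r).aestronglyMeasurable) ?_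
    ((intervalIntegrable_inv_sqrt_chord hr.le).const_mul _) ?_
  · filter_upwards [eventually_le_atBot (-1 / 2)] with p hp
    filter_upwards [hIoo] with s hs hsΙ
    obtain ⟨hs₁, hsr⟩ := hs hsΙ
    rw [norm_inv, norm_of_nonneg (sqrt_nonneg _), ← mul_inv, ← sqrt_mul hκ.le]
    exact inv_anti₀ (sqrt_pos.2 (mul_pos hκ (mul_pos (by linarith) (by linarith))))
      (sqrt_le_sqrt (mul_le_Fp hα hp hr hs₁.le hsr.le))
  · filter_upwards [hIoo] with s hs hsΙ
    obtain ⟨hs₁, hsr⟩ := hs hsΙ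
    exact ((continuous_sqrt.tendsto _).inv₀ (sqrt_pos.2 (Flim_pos hα hs₁ hsr)).ne').comp
      (tendsto_Fp_atBot hr hs₁)
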